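/- Let G be a connected bipartite graph of order at least 4 with parts U and W satisfying |U| = |W|. Then λ(Ḡ) ≤ λ(G). -/

import Mathlib

noncomputable section
open Classical

variable {V : Type*}

/-- `S` is a distinguishing set of `G`. -/
def IsDistinguishing (G : SimpleGraph V) (S : Set V) : Prop :=
  ∀ u ∉ S, ∀ v ∉ S, u ≠ v → G.neighborSet u ∩ S ≠ G.neighborSet v ∩ S

/-- `S` is a dominating set of `G`. -/
def IsDominating (G : SimpleGraph V) (S : Set V) : Prop :=
  ∀ v ∉ S, ∃ u ∈ S, G.Adj v u

/-- `S` is a locating-dominating set of `G`. -/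
def IsLD (G : SimpleGraph V) (S : Set V) : Prop :=
  IsDistinguishing G S ∧ IsDominating G S

/-- The location-domination number of `G`. -/
def ldNum (G : SimpleGraph V) : ℕ :=
  sInf {n | ∃ S : Set V, S.ncard = n ∧ IsLD G S}

/-- The graph `G^S` associated with a distinguishing set `S`:
vertices outside `S` are adjacent iff their neighborhoods in `S`
differ in exactly one vertex (the label of the edge). -/
def assocGraph (G : SimpleGraph V) (S : Set V) : SimpleGraph V where
  Adj x y := x ∉ S ∧ y ∉ S ∧
    ∃ u, symmDiff (G.neighborSet x ∩ S) (G.neighborSet y ∩ S) = {u}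
  symm := by
    constructor
    rintro x y ⟨hx, hy, u, hu⟩
    exact ⟨hy, hx, u, by rwa [symmDiff_comm]⟩
  loopless := by
    constructor
    rintro x ⟨-, -, u, hu⟩
    rw [symmDiff_self] at hu
    exact (Set.singleton_ne_empty u) (by simpa using hu.symm)

/-- The edge `e` of `G^S` has label `u`. -/
def edgeLabelIs (G : SimpleGraph V) (S : Set V) (u : V) (e : Sym2 V) : Prop :=
  Sym2.lift ⟨fun x y => symmDiff (G.neighborSet x ∩ S) (G.neighborSet y ∩ S) = {u},
    fun x y => by simp only []; rw [symmDiff_comm]⟩ e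

/-- The number of edges with label `u` in a list of edges (e.g. of a walk in `G^S`). -/
def labelCount (G : SimpleGraph V) (S : Set V) (u : V) (l : List (Sym2 V)) : ℕ :=
  l.countP fun e => decide (edgeLabelIs G S u e)

/-- No edge of `H` lies on two distinct cycles: any two cycles sharing an edge
have the same edge set.  (This says precisely that every connected component of
`H` is a cactus.) -/
def NoEdgeOnTwoCycles {α : Type*} (H : SimpleGraph α) : Prop :=
  ∀ (x y : α) (p : H.Walk x x) (q : H.Walk y y), p.IsCycle → q.IsCycle →
    ∀ e ∈ p.edges, e ∈ q.edges → ∀ e', e' ∈ p.edges ↔ e' ∈ q.edges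

/-- A cactus is a connected graph in which no edge lies on two distinct cycles. -/
def IsCactus {α : Type*} (H : SimpleGraph α) : Prop :=
  H.Connected ∧ NoEdgeOnTwoCycles H

/-- `x` and `y` are twins in `G`. -/
def Twins (G : SimpleGraph V) (x y : V) : Prop :=
  G.neighborSet x = G.neighborSet y ∨
    G.neighborSet x ∪ {x} = G.neighborSet y ∪ {y}

/-- `x` and `y` are twins in the vertex-deleted graph `G - u`. -/
def TwinsAvoid (G : SimpleGraph V) (u x y : V) : Prop :=
  G.neighborSet x \ {u} = G.neighborSet y \ {u} ∨
    (G.neighborSet x ∪ {x}) \ {u} = (G.neighborSet y ∪ {y}) \ {u}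

/-- `U, W` is a bipartition of `G` into two stable (independent) sets. -/
def BipartitionOf (G : SimpleGraph V) (U W : Set V) : Prop :=
  U ∪ W = Set.univ ∧ Disjoint U W ∧
    (∀ x ∈ U, ∀ y ∈ U, ¬ G.Adj x y) ∧ (∀ x ∈ W, ∀ y ∈ W, ¬ G.Adj x y)

/-!
Take a minimum locating-dominating set `S` of `G`. Inside `S`, the `Gᶜ`-neighbourhood of an
outside vertex is the complement of its `G`-neighbourhood, so `S` still distinguishes in `Gᶜ`, and
it works for `Gᶜ` unless some outside vertex `v` is `G`-adjacent to all of `S`. Then `S` is the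
whole part `W` opposite to `v`, so the vertices of `U` have distinct neighbourhoods. Over `ZMod 2`,
every label `w` with `N(x) ∆ N(y) = {w}` (`x, y ∈ U`) gives a unit vector in the span of the
`|U| - 1` vectors `χ N(x) - χ N(u)`, so some `w₀ ∈ W` is not a label. Swapping `w₀` for a
neighbour `u₀` yields the locating-dominating set `(W \ {w₀}) ∪ {u₀}` of `Gᶜ`, of size `|W|`.
-/

open scoped symmDiff

section Labels

variable {α β : Type*}

lemma indicator_sub_indicator_eq_indicator_symmDiff (A B : Set β) :
    A.indicator (1 : β → ZMod 2) - B.indicator 1 = (A ∆ B).indicator 1 := by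
  funext v
  by_cases hA : v ∈ A <;> by_cases hB : v ∈ B <;>
    simp [Set.mem_symmDiff, hA, hB]

theorem encard_setOf_symmDiff_eq_singleton_lt {U : Set α} (hU : U.Finite) (hne : U.Nonempty)
    (f : α → Set β) :
    {w | ∃ x ∈ U, ∃ y ∈ U, f x ∆ f y = {w}}.encard < U.encard := by
  classical
  obtain ⟨u₀, hu₀⟩ := hne
  set L := {w | ∃ x ∈ U, ∃ y ∈ U, f x ∆ f y = {w}}
  let χ : α → β → ZMod 2 := fun x => (f x).indicator 1 - (f u₀).indicator 1
  let D : Finset (β → ZMod 2) := (hU.toFinset.erase u₀).image χ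
  have hχ : ∀ x ∈ U, χ x ∈ Submodule.span (ZMod 2) (D : Set _) := by
    intro x hx
    by_cases h : x = u₀
    · simp [χ, h]
    · exact Submodule.subset_span (by simpa [D] using ⟨x, ⟨hx, h⟩, rfl⟩)
  have hspan : Set.range (fun w : L => Pi.single (w : β) (1 : ZMod 2)) ⊆
      (Submodule.span (ZMod 2) (D : Set (β → ZMod 2)) : Set (β → ZMod 2)) := by
    rintro _ ⟨⟨w, x, hx, y, hy, hxy⟩, rfl⟩
    have hwχ : Pi.single w 1 = χ x - χ y := by
      rw [sub_sub_sub_cancel_right, indicator_sub_indicator_eq_indicator_symmDiff, hxy,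
        Set.indicator_singleton]
      rfl
    change Pi.single w 1 ∈ _
    rw [hwχ]
    exact sub_mem (hχ x hx) (hχ y hy)
  have hL : Cardinal.mk L ≤ D.card := by
    have := linearIndependent_le_span' _
      ((Pi.linearIndependent_single_one β (ZMod 2)).comp _ Subtype.val_injective) _ hspan
    simpa only [Finset.coe_sort_coe, Fintype.card_coe] using this
  calc L.encard ≤ D.card := Cardinal.toENat_le_natCast.mpr hL
    _ ≤ (hU.toFinset.erase u₀).card := by exact_mod_cast Finset.card_image_le
    _ < hU.toFinset.card := by exact_mod_cast Finset.card_erase_lt_of_mem (by simpa using hu₀)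
    _ = U.encard := (hU.encard_eq_coe_toFinset_card).symm

lemma symmDiff_eq_singleton_of_sdiff_singleton_eq {A B : Set β} {w : β}
    (h : A \ {w} = B \ {w}) (hne : A ≠ B) : A ∆ B = {w} := by
  have hw : ¬(w ∈ A ↔ w ∈ B) := fun hw => hne <| Set.ext fun v => by
    by_cases hv : v = w
    · exact hv ▸ hw
    · simpa [hv] using Set.ext_iff.mp h v
  ext v
  by_cases hv : v = w
  · subst hv
    simp only [Set.mem_symmDiff, Set.mem_singleton_iff, iff_true]
    tauto
  · have := Set.ext_iff.mp h v
    simp only [Set.mem_sdiff, Set.mem_singleton_iff, hv, not_false_eq_true, and_true] at this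
    simp only [Set.mem_symmDiff, Set.mem_singleton_iff, hv, iff_false]
    tauto

end Labels

section LocatingDomination

variable {G : SimpleGraph V} {S U W : Set V}

lemma compl_neighborSet_inter_of_notMem {z : V} (hz : z ∉ S) :
    Gᶜ.neighborSet z ∩ S = S \ G.neighborSet z := by
  ext u
  simp only [SimpleGraph.neighborSet_compl, Set.mem_inter_iff, Set.mem_sdiff, Set.mem_compl_iff,
    Set.mem_singleton_iff]
  exact ⟨fun ⟨⟨hu, _⟩, huS⟩ => ⟨huS, hu⟩, fun ⟨huS, hu⟩ => ⟨⟨hu, by rintro rfl; exact hz huS⟩, huS⟩⟩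

lemma isDistinguishing_compl_iff : IsDistinguishing Gᶜ S ↔ IsDistinguishing G S := by
  refine forall₂_congr fun u hu => forall₂_congr fun v hv => imp_congr_right fun _ => ?_
  rw [compl_neighborSet_inter_of_notMem hu, compl_neighborSet_inter_of_notMem hv, Ne, Ne,
    not_iff_not]
  simp only [Set.ext_iff, Set.mem_sdiff, Set.mem_inter_iff]
  exact forall_congr' fun x => by tauto

lemma ldNum_le_ncard (h : IsLD G S) : ldNum G ≤ S.ncard :=
  Nat.sInf_le ⟨S, rfl, h⟩

lemma exists_isLD_ncard_eq_ldNum (G : SimpleGraph V) : ∃ S, IsLD G S ∧ S.ncard = ldNum G := by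
  have hne : {n | ∃ S : Set V, S.ncard = n ∧ IsLD G S}.Nonempty :=
    ⟨_, Set.univ, rfl, fun u hu => absurd trivial hu, fun v hv => absurd trivial hv⟩
  obtain ⟨S, hS, hLD⟩ := Nat.sInf_mem hne
  exact ⟨S, hLD, hS⟩

lemma exists_forall_adj_of_not_isDominating_compl (h : ¬ IsDominating Gᶜ S) :
    ∃ v, ∀ u ∈ S, G.Adj v u := by
  simp only [IsDominating, SimpleGraph.compl_adj, not_forall, not_exists, not_and] at h
  obtain ⟨v, hv, hadj⟩ := h
  exact ⟨v, fun u hu => not_not.mp (hadj u hu (by rintro rfl; exact hv hu))⟩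

end LocatingDomination

namespace BipartitionOf

variable {G : SimpleGraph V} {S U W : Set V} {u₀ v w₀ w₁ x : V}

lemma symm (h : BipartitionOf G U W) : BipartitionOf G W U :=
  ⟨Set.union_comm U W ▸ h.1, h.2.1.symm, h.2.2.2, h.2.2.1⟩

lemma mem_or_mem (h : BipartitionOf G U W) (v : V) : v ∈ U ∨ v ∈ W :=
  Set.mem_union v U W |>.mp (h.1 ▸ Set.mem_univ v)

lemma notMem_right (h : BipartitionOf G U W) (hv : v ∈ U) : v ∉ W :=
  Set.disjoint_left.mp h.2.1 hv

lemma neighborSet_subset (h : BipartitionOf G U W) (hx : x ∈ U) : G.neighborSet x ⊆ W :=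
  fun y hy => (h.mem_or_mem y).resolve_left fun hyU => h.2.2.1 x hx y hyU hy

lemma ncard_add_ncard [Finite V] (h : BipartitionOf G U W) : U.ncard + W.ncard = Nat.card V := by
  rw [← Set.ncard_union_eq h.2.1, h.1, Set.ncard_univ]

lemma eq_right_of_isDominating_of_forall_adj (h : BipartitionOf G U W) (hS : IsDominating G S)
    (hv : v ∈ U) (hadj : ∀ u ∈ S, G.Adj v u) : S = W := by
  have hSW : S ⊆ W := fun u hu => h.neighborSet_subset hv (hadj u hu)
  refine hSW.antisymm fun w hw => by_contra fun hwS => ?_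
  obtain ⟨u, huS, hwu⟩ := hS w hwS
  exact h.2.2.2 w hw u (hSW huS) hwu

lemma neighborSet_inter_insert_sdiff (h : BipartitionOf G U W) (hx : x ∈ U) (hu₀ : u₀ ∈ U) :
    G.neighborSet x ∩ insert u₀ (W \ {w₀}) = G.neighborSet x \ {w₀} := by
  ext y
  simp only [Set.mem_inter_iff, Set.mem_insert_iff, Set.mem_sdiff, SimpleGraph.mem_neighborSet]
  constructor
  · rintro ⟨hxy, rfl | ⟨-, hy⟩⟩
    · exact absurd hxy (h.2.2.1 x hx _ hu₀)
    · exact ⟨hxy, hy⟩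
  · rintro ⟨hxy, hy⟩
    exact ⟨hxy, .inr ⟨h.neighborSet_subset hx hxy, hy⟩⟩

lemma isDistinguishing_insert_sdiff (h : BipartitionOf G U W) (hW : IsDistinguishing G W)
    (hw₀ : w₀ ∈ W) (hadj : G.Adj w₀ u₀)
    (hlabel : ∀ x ∈ U, ∀ y ∈ U, G.neighborSet x ∆ G.neighborSet y ≠ {w₀}) :
    IsDistinguishing G (insert u₀ (W \ {w₀})) := by
  have hu₀ : u₀ ∈ U := h.symm.neighborSet_subset hw₀ hadj
  have hout : ∀ z ∉ insert u₀ (W \ {w₀}), z ∈ U ∨ z = w₀ := fun z hz =>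
    (h.mem_or_mem z).imp_right fun hzW => by_contra fun hne => hz (.inr ⟨hzW, hne⟩)
  -- `u₀` is seen by `w₀` but by no vertex of `U`
  have hsep : ∀ x ∈ U, G.neighborSet x ∩ insert u₀ (W \ {w₀}) ≠
      G.neighborSet w₀ ∩ insert u₀ (W \ {w₀}) := fun x hx hN => by
    have hmem : u₀ ∈ G.neighborSet x ∩ insert u₀ (W \ {w₀}) := hN ▸ ⟨hadj, Set.mem_insert _ _⟩
    exact h.2.2.1 x hx u₀ hu₀ hmem.1
  intro a ha b hb hab
  rcases hout a ha with haU | rfl <;> rcases hout b hb with hbU | rfl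
  · rw [h.neighborSet_inter_insert_sdiff haU hu₀, h.neighborSet_inter_insert_sdiff hbU hu₀]
    intro hN
    have hne := hW a (h.notMem_right haU) b (h.notMem_right hbU) hab
    rw [Set.inter_eq_left.mpr (h.neighborSet_subset haU),
      Set.inter_eq_left.mpr (h.neighborSet_subset hbU)] at hne
    exact hlabel a haU b hbU (symmDiff_eq_singleton_of_sdiff_singleton_eq hN hne)
  · exact hsep a haU
  · exact (hsep b hbU).symm
  · exact absurd rfl hab

lemma isDominating_compl_insert_sdiff (h : BipartitionOf G U W) (hu₀ : u₀ ∈ U) (hw₁ : w₁ ∈ W)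
    (hne : w₁ ≠ w₀) : IsDominating Gᶜ (insert u₀ (W \ {w₀})) := by
  intro z hz
  simp only [Set.mem_insert_iff, Set.mem_sdiff, Set.mem_singleton_iff, not_or, not_and,
    not_not] at hz
  rcases h.mem_or_mem z with hzU | hzW
  · exact ⟨u₀, Set.mem_insert _ _, hz.1, h.2.2.1 z hzU u₀ hu₀⟩
  · obtain rfl := hz.2 hzW
    exact ⟨w₁, .inr ⟨hw₁, hne⟩, hne.symm, h.2.2.2 _ hzW w₁ hw₁⟩

theorem ldNum_compl_le_ncard_of_isDistinguishing [Finite V] (h : BipartitionOf G U W)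
    (heq : U.ncard = W.ncard) (hiso : ∀ v, ¬ G.IsIsolated v) (hW₂ : 1 < W.ncard)
    (hW : IsDistinguishing G W) : ldNum Gᶜ ≤ W.ncard := by
  have hUne : U.Nonempty := Set.nonempty_of_ncard_ne_zero (by omega)
  obtain ⟨w₀, hw₀, hlabel⟩ :
      ∃ w₀ ∈ W, ∀ x ∈ U, ∀ y ∈ U, G.neighborSet x ∆ G.neighborSet y ≠ {w₀} := by
    by_contra! hcon
    have hlt := (Set.encard_le_encard hcon).trans_lt
      (encard_setOf_symmDiff_eq_singleton_lt U.toFinite hUne G.neighborSet)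
    rw [← U.toFinite.cast_ncard_eq, ← W.toFinite.cast_ncard_eq, heq] at hlt
    exact hlt.false
  obtain ⟨u₀, hadj⟩ := SimpleGraph.exists_adj_iff_not_isIsolated.mpr (hiso w₀)
  obtain ⟨w₁, hw₁, hne⟩ := Set.exists_ne_of_one_lt_ncard hW₂ w₀
  have hu₀ : u₀ ∈ U := h.symm.neighborSet_subset hw₀ hadj
  calc ldNum Gᶜ ≤ (insert u₀ (W \ {w₀})).ncard :=
        ldNum_le_ncard ⟨isDistinguishing_compl_iff.mpr
          (h.isDistinguishing_insert_sdiff hW hw₀ hadj hlabel),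
          h.isDominating_compl_insert_sdiff hu₀ hw₁ hne⟩
    _ = W.ncard := by
      rw [Set.ncard_insert_of_notMem fun hu₀W => h.notMem_right hu₀ hu₀W.1,
        Set.ncard_sdiff_singleton_add_one hw₀]

theorem ldNum_compl_le_of_forall_adj [Finite V] (h : BipartitionOf G U W)
    (heq : U.ncard = W.ncard) (hiso : ∀ v, ¬ G.IsIsolated v) (hW₂ : 1 < W.ncard)
    (hS : IsLD G S) (hv : v ∈ U) (hadj : ∀ u ∈ S, G.Adj v u) : ldNum Gᶜ ≤ S.ncard := by
  obtain rfl := h.eq_right_of_isDominating_of_forall_adj hS.2 hv hadj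
  exact h.ldNum_compl_le_ncard_of_isDistinguishing heq hiso hW₂ hS.1

end BipartitionOf

theorem ldNum_compl_le_of_equal_parts [Fintype V] (G : SimpleGraph V) (U W : Set V)
    (hbip : BipartitionOf G U W) (hconn : G.Connected)
    (h4 : 4 ≤ Fintype.card V) (heq : U.ncard = W.ncard) :
    ldNum Gᶜ ≤ ldNum G := by
  obtain ⟨S, hS, hSmin⟩ := exists_isLD_ncard_eq_ldNum G
  rw [← hSmin]
  by_cases hdom : IsDominating Gᶜ S
  · exact ldNum_le_ncard ⟨isDistinguishing_compl_iff.mpr hS.1, hdom⟩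
  obtain ⟨v, hv⟩ := exists_forall_adj_of_not_isDominating_compl hdom
  have hparts := hbip.ncard_add_ncard
  rw [Nat.card_eq_fintype_card] at hparts
  have : Nontrivial V := Fintype.one_lt_card_iff_nontrivial.mp (by omega)
  have hiso := hconn.preconnected.not_isIsolated
  rcases hbip.mem_or_mem v with hvU | hvW
  · exact hbip.ldNum_compl_le_of_forall_adj heq hiso (by omega) hS hvU hv
  · exact hbip.symm.ldNum_compl_le_of_forall_adj heq.symm hiso (by omega) hS hvW hv

end
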